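/- Let G be a finite simple graph and F a finite simple graph that is regular of degree r. Let φ be a voltage assignment on G whose values lie in an abelian subgroup Γ of Aut(F), and suppose M is an invertible complex V(F)×V(F) matrix such that M⁻¹P(γ)M is diagonal for every γ ∈ Γ, with diagonal entries λ_{(γ,1)}, …, λ_{(γ,ν_F)} (ν_F = |V(F)|), and M⁻¹A(F)M is diagonal with diagonal entries λ_{(F,1)}, …, λ_{(F,ν_F)}. Then for every complex μ, (M ⊗ I_{V(G)})⁻¹ (A(G×^φF) − μ·D(G×^φF)) (M ⊗ I_{V(G)}) = ⊕_{i=1}^{ν_F} ( (λ_{(F,i)} − rμ)·I_{V(G)} + Σ_{γ∈Γ} λ_{(γ,i)}·A(G_{φ,γ}) − μ·D(G) ), where vertices of G×^φF are indexed by pairs (v,u) with v ∈ V(F), u ∈ V(G). -/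

import Mathlib

open Matrix BigOperators Kronecker
open scoped Classical

noncomputable section

variable {α β : Type*}

def adjM [Fintype α] (G : SimpleGraph α) : Matrix α α ℂ :=
  Matrix.of fun u v => if G.Adj u v then (1 : ℂ) else 0

def degM [Fintype α] (G : SimpleGraph α) : Matrix α α ℂ :=
  Matrix.diagonal fun v => ((G.neighborSet v).ncard : ℂ)

def Fpoly [Fintype α] (G : SimpleGraph α) (lam mu : ℂ) : ℂ :=
  (lam • (1 : Matrix α α ℂ) - (adjM G - mu • degM G)).det

def permM (γ : Equiv.Perm β) : Matrix β β ℂ :=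
  Matrix.of fun v w => if γ v = w then (1 : ℂ) else 0

def voltM [Fintype α] (G : SimpleGraph α) (φ : α → α → Equiv.Perm β) (γ : Equiv.Perm β) :
    Matrix α α ℂ :=
  Matrix.of fun u₁ u₂ => if G.Adj u₁ u₂ ∧ φ u₁ u₂ = γ then (1 : ℂ) else 0

def autPerm (F : SimpleGraph β) : Subgroup (Equiv.Perm β) where
  carrier := {γ | ∀ a b, F.Adj (γ a) (γ b) ↔ F.Adj a b}
  one_mem' := by intro a b; simp
  mul_mem' := by intro γ δ hγ hδ a b; simp [Equiv.Perm.mul_apply, hγ _ _, hδ _ _]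
  inv_mem' := by intro γ hγ a b; simpa using (hγ (γ⁻¹ a) (γ⁻¹ b)).symm

def bundle (G : SimpleGraph α) (F : SimpleGraph β) (φ : α → α → Equiv.Perm β)
    (hsym : ∀ u₁ u₂, G.Adj u₁ u₂ → φ u₂ u₁ = (φ u₁ u₂)⁻¹) : SimpleGraph (β × α) where
  Adj p q := (G.Adj p.2 q.2 ∧ q.1 = φ p.2 q.2 p.1) ∨ (p.2 = q.2 ∧ F.Adj p.1 q.1)
  symm := by
    constructor
    rintro ⟨v₁, u₁⟩ ⟨v₂, u₂⟩ hadj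
    dsimp only at hadj ⊢
    rcases hadj with ⟨h, rfl⟩ | ⟨rfl, h⟩
    · left
      refine ⟨h.symm, ?_⟩
      rw [hsym _ _ h]
      simp
    · right
      exact ⟨rfl, h.symm⟩
  loopless := by
    constructor
    rintro ⟨v, u⟩ hadj
    dsimp only at hadj
    rcases hadj with ⟨h, _⟩ | ⟨_, h⟩
    · exact G.loopless.irrefl u h
    · exact F.loopless.irrefl v h

def dsum [Fintype α] (B : β → Matrix α α ℂ) : Matrix (β × α) (β × α) ℂ :=
  Matrix.of fun p q => if p.1 = q.1 then B p.1 p.2 q.2 else 0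

def bigE {ℓ : ℕ} {f m : Fin ℓ → ℕ} (e : β ≃ Σ i : Fin ℓ, Fin (m i) × Fin (f i)) (α : Type*) :
    β × α ≃ Σ i : Fin ℓ, Fin (m i) × (Fin (f i) × α) :=
  (e.prodCongr (Equiv.refl α)).trans
    ((Equiv.sigmaProdDistrib _ _).trans (Equiv.sigmaCongrRight fun _ => Equiv.prodAssoc _ _ _))


/-!
Indexing vertices of the bundle by `(v, u)` with `v ∈ V(F)`, its adjacency matrix is
`∑ γ, P(γ) ⊗ A(G_{φ,γ}) + A(F) ⊗ I` and, for `r`-regular `F`, its degree matrix is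
`r • I + I ⊗ D(G)`. Conjugation by `M ⊗ I` acts on the first Kronecker factor only, so it
diagonalises every `P(γ)` and `A(F)` simultaneously, and `diagonal c ⊗ B` is the block-diagonal
matrix with blocks `c v • B`.
-/

theorem inv_kronecker_one_mul_kronecker_mul_kronecker_one {R m n o : Type*} [CommRing R]
    [Fintype n] [Fintype m] [Fintype o] (M : Matrix n n R) (A : Matrix n n R) (B : Matrix m o R) :
    (M ⊗ₖ (1 : Matrix m m R))⁻¹ * (A ⊗ₖ B) * (M ⊗ₖ (1 : Matrix o o R))
      = (M⁻¹ * A * M) ⊗ₖ B := by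
  rw [inv_kronecker, inv_one, ← mul_kronecker_mul, ← mul_kronecker_mul, Matrix.one_mul,
    Matrix.mul_one]

section Bundle

variable {G : SimpleGraph α} {F : SimpleGraph β}
  {φ : α → α → Equiv.Perm β} (hsym : ∀ u₁ u₂, G.Adj u₁ u₂ → φ u₂ u₁ = (φ u₁ u₂)⁻¹)

theorem neighborSet_bundle (v : β) (u : α) :
    (bundle G F φ hsym).neighborSet (v, u)
      = (fun x => (φ u x v, x)) '' G.neighborSet u ∪ (fun w => (w, u)) '' F.neighborSet v := by
  ext ⟨w, x⟩
  simp only [SimpleGraph.mem_neighborSet, bundle, Set.mem_union, Set.mem_image, Prod.mk.injEq]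
  constructor
  · rintro (⟨hG, rfl⟩ | ⟨rfl, hF⟩)
    · exact Or.inl ⟨x, hG, rfl, rfl⟩
    · exact Or.inr ⟨w, hF, rfl, rfl⟩
  · rintro (⟨x, hG, rfl, rfl⟩ | ⟨w, hF, rfl, rfl⟩)
    · exact Or.inl ⟨hG, rfl⟩
    · exact Or.inr ⟨rfl, hF⟩

variable [Fintype α] [Fintype β]

theorem ncard_neighborSet_bundle (v : β) (u : α) :
    ((bundle G F φ hsym).neighborSet (v, u)).ncard
      = (F.neighborSet v).ncard + (G.neighborSet u).ncard := by
  have hdisj : Disjoint ((fun x => (φ u x v, x)) '' G.neighborSet u)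
      ((fun w => (w, u)) '' F.neighborSet v) := by
    rw [Set.disjoint_left]
    rintro _ ⟨x, hx, rfl⟩ ⟨w, -, hw⟩
    cases congrArg Prod.snd hw
    exact G.loopless.irrefl _ hx
  rw [neighborSet_bundle, Set.ncard_union_eq hdisj,
    Set.ncard_image_of_injective _ fun _ _ h => congrArg Prod.snd h,
    Set.ncard_image_of_injective _ fun _ _ h => congrArg Prod.fst h, add_comm]

theorem adjM_bundle {Γ : Subgroup (Equiv.Perm β)} (hφΓ : ∀ u₁ u₂, G.Adj u₁ u₂ → φ u₁ u₂ ∈ Γ) :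
    adjM (bundle G F φ hsym)
      = (∑ γ : Γ, permM (γ : Equiv.Perm β) ⊗ₖ voltM G φ γ) + adjM F ⊗ₖ (1 : Matrix α α ℂ) := by
  ext ⟨v₁, u₁⟩ ⟨v₂, u₂⟩
  simp only [adjM, permM, voltM, Matrix.add_apply, Matrix.sum_apply, kronecker_apply, of_apply,
    one_apply, bundle]
  by_cases h : G.Adj u₁ u₂
  · rw [Fintype.sum_eq_single ⟨φ u₁ u₂, hφΓ _ _ h⟩]
    · simp [h, G.ne_of_adj h, eq_comm]
    · intro γ hγ
      have : φ u₁ u₂ ≠ γ := fun he => hγ (Subtype.ext he.symm)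
      simp [this]
  · by_cases he : u₁ = u₂ <;> simp [h, he]

theorem degM_bundle :
    degM (bundle G F φ hsym)
      = degM F ⊗ₖ (1 : Matrix α α ℂ) + (1 : Matrix β β ℂ) ⊗ₖ degM G := by
  rw [degM, degM, degM, ← diagonal_one, ← diagonal_one, diagonal_kronecker_diagonal,
    diagonal_kronecker_diagonal, diagonal_add]
  congr! 1
  funext ⟨v, u⟩
  simp [ncard_neighborSet_bundle]

end Bundle

theorem degM_eq_smul_one_of_regular [Fintype β] {F : SimpleGraph β} {r : ℕ}
    (hreg : ∀ v, (F.neighborSet v).ncard = r) : degM F = (r : ℂ) • 1 := by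
  simp [degM, smul_one_eq_diagonal, hreg]

theorem bundle_matrix_similarity_abelian_general
    {α β : Type*} [Fintype α] [Fintype β]
    (G : SimpleGraph α) (F : SimpleGraph β)
    (r : ℕ) (hreg : ∀ v, (F.neighborSet v).ncard = r)
    (φ : α → α → Equiv.Perm β)
    (hsym : ∀ u₁ u₂, G.Adj u₁ u₂ → φ u₂ u₁ = (φ u₁ u₂)⁻¹)
    (Γ : Subgroup (Equiv.Perm β))
    (hφΓ : ∀ u₁ u₂, G.Adj u₁ u₂ → φ u₁ u₂ ∈ Γ)
    (M : Matrix β β ℂ) (hM : IsUnit M.det)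
    (d : Equiv.Perm β → β → ℂ)
    (hPd : ∀ γ ∈ Γ, M⁻¹ * permM γ * M = Matrix.diagonal (d γ))
    (dF : β → ℂ)
    (hAd : M⁻¹ * adjM F * M = Matrix.diagonal dF)
    (μ : ℂ) :
    (M ⊗ₖ (1 : Matrix α α ℂ))⁻¹
        * (adjM (bundle G F φ hsym) - μ • degM (bundle G F φ hsym))
        * (M ⊗ₖ (1 : Matrix α α ℂ))
      = dsum fun v =>
          (dF v - (r : ℂ) * μ) • (1 : Matrix α α ℂ)
            + ((∑ γ : Γ, d (γ : Equiv.Perm β) v • voltM G φ (γ : Equiv.Perm β))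
                - μ • degM G) := by
  have hMM : M⁻¹ * M = 1 := nonsing_inv_mul M hM
  have hPdiag : ∀ γ : Γ, M⁻¹ * permM (γ : Equiv.Perm β) * M = diagonal (d γ) :=
    fun γ => hPd γ γ.2
  rw [adjM_bundle hsym hφΓ, degM_bundle, degM_eq_smul_one_of_regular hreg]
  simp only [Matrix.mul_sub, Matrix.sub_mul, Matrix.mul_add, Matrix.add_mul, Matrix.mul_smul,
    Matrix.smul_mul, Finset.mul_sum, Finset.sum_mul,
    inv_kronecker_one_mul_kronecker_mul_kronecker_one, hPdiag, hAd, Matrix.mul_one, hMM]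
  ext ⟨v, u⟩ ⟨w, x⟩
  rcases eq_or_ne v w with rfl | hvw
  · simp [dsum, Matrix.sum_apply]
    ring
  · simp [dsum, Matrix.sum_apply, hvw]

theorem bundle_matrix_similarity_abelian
    {α β : Type*} [Fintype α] [Fintype β]
    (G : SimpleGraph α) (F : SimpleGraph β)
    (r : ℕ) (hreg : ∀ v, (F.neighborSet v).ncard = r)
    (φ : α → α → Equiv.Perm β)
    (hsym : ∀ u₁ u₂, G.Adj u₁ u₂ → φ u₂ u₁ = (φ u₁ u₂)⁻¹)
    (Γ : Subgroup (Equiv.Perm β)) (hΓAut : Γ ≤ autPerm F)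
    (hΓab : ∀ γ δ : Γ, γ * δ = δ * γ)
    (hφΓ : ∀ u₁ u₂, G.Adj u₁ u₂ → φ u₁ u₂ ∈ Γ)
    (M : Matrix β β ℂ) (hM : IsUnit M.det)
    (d : Equiv.Perm β → β → ℂ)
    (hPd : ∀ γ ∈ Γ, M⁻¹ * permM γ * M = Matrix.diagonal (d γ))
    (dF : β → ℂ)
    (hAd : M⁻¹ * adjM F * M = Matrix.diagonal dF)
    (μ : ℂ) :
    (M ⊗ₖ (1 : Matrix α α ℂ))⁻¹
        * (adjM (bundle G F φ hsym) - μ • degM (bundle G F φ hsym))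
        * (M ⊗ₖ (1 : Matrix α α ℂ))
      = dsum fun v =>
          (dF v - (r : ℂ) * μ) • (1 : Matrix α α ℂ)
            + ((∑ γ : Γ, d (γ : Equiv.Perm β) v • voltM G φ (γ : Equiv.Perm β))
                - μ • degM G) :=
  bundle_matrix_similarity_abelian_general G F r hreg φ hsym Γ hφΓ M hM d hPd dF hAd μ

end
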